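/- Let A be the n×n tridiagonal matrix A = L_2(ℓ_1) L_3(ℓ_2) ⋯ L_n(ℓ_{n−1}) D U_n(u_{n−1}) ⋯ U_3(u_2) U_2(u_1), where all ℓ_i, u_i > 0 and D is a diagonal matrix with positive diagonal entries. Then the (n,1) and (1,n) entries of A^{n−2} are zero; consequently the exponent of A equals n−1, i.e., A^{n−1} is totally positive but A^{n−2} is not. -/

import Mathlib

/-!
The product of the factors `L_i` is the unit lower bidiagonal matrix with subdiagonal `ℓ` (the
nilpotent parts of consecutive factors annihilate each other in this order), and the product of
the `U_i` is the transpose of such a matrix. Hence `A = L U` with `L` lower and `U` upper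
bidiagonal, both positive on their bands. In a minor of a bidiagonal matrix only the identity
permutation contributes, so `L` and `U`, and by Cauchy–Binet `A`, are totally nonnegative.

Since `A` is tridiagonal, `A ^ r` has bandwidth `r` and its corner entries vanish for `r ≤ n - 2`.
Conversely, a minor of `A` whose row and column indices pair off within distance one is positive:
its Cauchy–Binet expansion through `L` and `U` contains the positive term indexed by `min p q`.
Moving the columns of a minor one step at a time towards its rows, the minors of `A ^ t` whose
indices pair off within distance `t` are positive, and for `t = n - 1` these are all minors.
-/

/-- A square real matrix is totally nonnegative if all its minors are nonnegative. -/
def TotallyNonneg {n : ℕ} (A : Matrix (Fin n) (Fin n) ℝ) : Prop :=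
  ∀ (k : ℕ) (r c : Fin k → Fin n), StrictMono r → StrictMono c →
    0 ≤ (A.submatrix r c).det

/-- A square real matrix is totally positive if all its minors are positive. -/
def TotallyPos {n : ℕ} (A : Matrix (Fin n) (Fin n) ℝ) : Prop :=
  ∀ (k : ℕ) (r c : Fin k → Fin n), StrictMono r → StrictMono c →
    0 < (A.submatrix r c).det

/-- The lower elementary bidiagonal matrix L_i(q) = I + q·E_{i,i−1} (1-indexed i). -/
def Lmat (n i : ℕ) (q : ℝ) : Matrix (Fin n) (Fin n) ℝ :=
  1 + Matrix.of fun a b : Fin n => if a.val + 1 = i ∧ b.val + 2 = i then q else 0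

/-- The upper elementary bidiagonal matrix U_i(q) = I + q·E_{i−1,i} (1-indexed i). -/
def Umat (n i : ℕ) (q : ℝ) : Matrix (Fin n) (Fin n) ℝ :=
  1 + Matrix.of fun a b : Fin n => if a.val + 2 = i ∧ b.val + 1 = i then q else 0

open Matrix Finset Equiv

namespace Matrix

variable {R : Type*} {n : ℕ}

section CauchyBinet

variable [CommRing R] {k : ℕ}

theorem det_mul_eq_sum_det_submatrix_mul_prod (P : Matrix (Fin k) (Fin n) R)
    (Q : Matrix (Fin n) (Fin k) R) :
    (P * Q).det = ∑ p : Fin k → Fin n, (P.submatrix id p).det * ∏ i, Q (p i) i := by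
  simp only [det_apply', mul_apply, prod_univ_sum, mul_sum, Fintype.piFinset_univ, sum_mul,
    prod_mul_distrib, submatrix_apply, id, ← mul_assoc]
  exact sum_comm

theorem det_submatrix_id_eq_zero_of_not_injective (P : Matrix (Fin k) (Fin n) R)
    {p : Fin k → Fin n} (hp : ¬ Function.Injective p) : (P.submatrix id p).det = 0 := by
  obtain ⟨i, j, hij, hne⟩ : ∃ i j, p i = p j ∧ i ≠ j := by
    simpa [Function.Injective] using hp
  exact det_zero_of_column_eq hne fun _ => by simp [hij]

theorem exists_strictMono_comp_perm_eq {p : Fin k → Fin n} (hp : Function.Injective p) :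
    ∃ f : Fin k → Fin n, StrictMono f ∧ ∃ σ : Perm (Fin k), f ∘ σ = p :=
  ⟨p ∘ Tuple.sort p,
    (Tuple.monotone_sort p).strictMono_of_injective (hp.comp (Tuple.sort p).injective),
    (Tuple.sort p)⁻¹, by ext; simp⟩

theorem strictMono_comp_perm_injective {f g : Fin k → Fin n} (hf : StrictMono f)
    (hg : StrictMono g) {σ τ : Perm (Fin k)} (h : f ∘ σ = g ∘ τ) : f = g ∧ σ = τ := by
  have hfg : f = g := by
    rw [← hf.range_inj hg, ← σ.surjective.range_comp, h, τ.surjective.range_comp]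
  subst hfg
  exact ⟨rfl, Equiv.ext fun i => hf.injective (congrFun h i)⟩

theorem cauchy_binet (P : Matrix (Fin k) (Fin n) R) (Q : Matrix (Fin n) (Fin k) R) :
    (P * Q).det = ∑ f ∈ {f : Fin k → Fin n | StrictMono f},
      (P.submatrix id f).det * (Q.submatrix f id).det := by
  set S := ({f : Fin k → Fin n | StrictMono f} : Finset _) ×ˢ (univ : Finset (Perm (Fin k)))
  have hinj : Set.InjOn (fun x : (Fin k → Fin n) × Perm (Fin k) => x.1 ∘ x.2) S := by
    rintro ⟨f, σ⟩ hx ⟨g, τ⟩ hy h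
    simp only [S, mem_coe, mem_product, mem_filter] at hx hy
    simpa [Prod.ext_iff] using strictMono_comp_perm_injective hx.1.2 hy.1.2 h
  rw [det_mul_eq_sum_det_submatrix_mul_prod, ← sum_subset (subset_univ (S.image _)),
    sum_image hinj, sum_product]
  · refine sum_congr rfl fun f hf => ?_
    rw [mem_filter] at hf
    simp only [Function.comp_apply, det_apply' (Q.submatrix f id), mul_sum]
    refine sum_congr rfl fun σ _ => ?_
    rw [show P.submatrix id (f ∘ σ) = (P.submatrix id f).submatrix id σ from rfl,
      det_permute']
    simp only [submatrix_apply, id]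
    ring
  · intro p _ hp
    suffices ¬ Function.Injective p by
      rw [det_submatrix_id_eq_zero_of_not_injective P this, zero_mul]
    intro hinj
    obtain ⟨f, hf, σ, rfl⟩ := exists_strictMono_comp_perm_eq hinj
    exact hp (mem_image.mpr ⟨(f, σ), by simp [S, hf], rfl⟩)

theorem det_submatrix_mul (M N : Matrix (Fin n) (Fin n) R) (r c : Fin k → Fin n) :
    ((M * N).submatrix r c).det = ∑ f ∈ {f : Fin k → Fin n | StrictMono f},
      (M.submatrix r f).det * (N.submatrix f c).det := by
  rw [submatrix_mul M N r id c Function.bijective_id, cauchy_binet]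
  simp only [submatrix_submatrix, Function.id_comp, Function.comp_id]

end CauchyBinet

/-- `p` bounds the number of nonzero subdiagonals and `q` that of superdiagonals. -/
def HasBandwidth [Zero R] (A : Matrix (Fin n) (Fin n) R) (p q : ℕ) : Prop :=
  ∀ a b : Fin n, A a b ≠ 0 → (a : ℕ) ≤ b + p ∧ (b : ℕ) ≤ a + q

namespace HasBandwidth

theorem apply_eq_zero [Zero R] {A : Matrix (Fin n) (Fin n) R} {p q : ℕ}
    (hA : HasBandwidth A p q) {a b : Fin n} (hab : (b : ℕ) + p < a ∨ (a : ℕ) + q < b) :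
    A a b = 0 := by
  by_contra h
  have := hA a b h
  omega

theorem mono [Zero R] {A : Matrix (Fin n) (Fin n) R} {p q p' q' : ℕ}
    (hA : HasBandwidth A p q) (hp : p ≤ p') (hq : q ≤ q') : HasBandwidth A p' q' :=
  fun a b h => by have := hA a b h; omega

theorem transpose [Zero R] {A : Matrix (Fin n) (Fin n) R} {p q : ℕ}
    (hA : HasBandwidth A p q) : HasBandwidth Aᵀ q p :=
  fun a b h => (hA b a h).symm

theorem one [Zero R] [One R] : HasBandwidth (1 : Matrix (Fin n) (Fin n) R) 0 0 :=
  fun a b h => by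
    obtain rfl : a = b := by by_contra hab; exact h (one_apply_ne hab)
    simp

theorem mul [NonUnitalNonAssocSemiring R] {A B : Matrix (Fin n) (Fin n) R} {p q p' q' : ℕ}
    (hA : HasBandwidth A p q) (hB : HasBandwidth B p' q') :
    HasBandwidth (A * B) (p + p') (q + q') := fun a b h => by
  rw [mul_apply] at h
  obtain ⟨c, -, hc⟩ := exists_ne_zero_of_sum_ne_zero h
  have := hA a c (left_ne_zero_of_mul hc)
  have := hB c b (right_ne_zero_of_mul hc)
  omega

theorem pow [Semiring R] {A : Matrix (Fin n) (Fin n) R} {p q : ℕ}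
    (hA : HasBandwidth A p q) (m : ℕ) : HasBandwidth (A ^ m) (m * p) (m * q) := by
  induction m with
  | zero => simpa using one
  | succ m ih => simpa [pow_succ, add_mul] using ih.mul hA

end HasBandwidth

theorem det_submatrix_eq_prod_of_hasBandwidth_one_zero [CommRing R]
    {A : Matrix (Fin n) (Fin n) R} (hA : HasBandwidth A 1 0) {k : ℕ} {r c : Fin k → Fin n}
    (hr : StrictMono r) (hc : StrictMono c) : (A.submatrix r c).det = ∏ s, A (r s) (c s) := by
  rw [det_apply', sum_eq_single 1 _ (by simp)]
  · simp
  intro σ _ hσ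
  suffices ∃ t, A (r (σ t)) (c t) = 0 by
    obtain ⟨t, ht⟩ := this
    rw [prod_eq_zero (mem_univ t) ht, mul_zero]
  by_contra! h
  -- a term of the Leibniz expansion that survives forces `σ` to preserve the order
  have hσ_mono : StrictMono σ := fun i j hij => by
    by_contra hle
    have hlt := hr (lt_of_le_of_ne (not_lt.mp hle) (σ.injective.ne hij.ne'))
    have := hA _ _ (h i)
    have := hA _ _ (h j)
    have := hc hij
    simp only [Fin.lt_def] at *
    omega
  exact hσ (Equiv.ext (congrFun hσ_mono.eq_id))

theorem det_submatrix_eq_prod_of_hasBandwidth_zero_one [CommRing R]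
    {A : Matrix (Fin n) (Fin n) R} (hA : HasBandwidth A 0 1) {k : ℕ} {r c : Fin k → Fin n}
    (hr : StrictMono r) (hc : StrictMono c) : (A.submatrix r c).det = ∏ s, A (r s) (c s) := by
  rw [← det_transpose, transpose_submatrix,
    det_submatrix_eq_prod_of_hasBandwidth_one_zero hA.transpose hc hr]
  rfl

end Matrix

theorem TotallyPos.apply_pos {n : ℕ} {A : Matrix (Fin n) (Fin n) ℝ} (hA : TotallyPos A)
    (a b : Fin n) : 0 < A a b := by
  simpa using hA 1 (fun _ => a) (fun _ => b) (Subsingleton.strictMono _)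
    (Subsingleton.strictMono _)

namespace TotallyNonneg

variable {n : ℕ} {A B : Matrix (Fin n) (Fin n) ℝ}

theorem of_transpose (hA : TotallyNonneg Aᵀ) : TotallyNonneg A := fun k r c hr hc => by
  simpa [← transpose_submatrix] using hA k c r hc hr

theorem of_hasBandwidth_one_zero (hA : A.HasBandwidth 1 0) (h0 : ∀ a b, 0 ≤ A a b) :
    TotallyNonneg A := fun _ _ _ hr hc => by
  rw [det_submatrix_eq_prod_of_hasBandwidth_one_zero hA hr hc]
  exact prod_nonneg fun _ _ => h0 _ _

theorem of_hasBandwidth_zero_one (hA : A.HasBandwidth 0 1) (h0 : ∀ a b, 0 ≤ A a b) :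
    TotallyNonneg A :=
  of_transpose (of_hasBandwidth_one_zero hA.transpose fun a b => h0 b a)

theorem one : TotallyNonneg (1 : Matrix (Fin n) (Fin n) ℝ) :=
  of_hasBandwidth_one_zero (HasBandwidth.one.mono zero_le_one le_rfl) fun a b => by
    rw [one_apply]
    split_ifs <;> norm_num

theorem mul (hA : TotallyNonneg A) (hB : TotallyNonneg B) : TotallyNonneg (A * B) :=
  fun k r c hr hc => by
    rw [det_submatrix_mul]
    exact sum_nonneg fun f hf => mul_nonneg (hA k r f hr (mem_filter.mp hf).2)
      (hB k f c (mem_filter.mp hf).2 hc)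

theorem pow (hA : TotallyNonneg A) (m : ℕ) : TotallyNonneg (A ^ m) := by
  induction m with
  | zero => simpa using one
  | succ m ih => simpa [pow_succ] using ih.mul hA

theorem det_submatrix_pow_pos (hA : TotallyNonneg A)
    (hadj : ∀ (k : ℕ) (p q : Fin k → Fin n), StrictMono p → StrictMono q →
      (∀ s, (p s : ℕ) ≤ q s + 1 ∧ (q s : ℕ) ≤ p s + 1) → 0 < (A.submatrix p q).det)
    (t : ℕ) {k : ℕ} {p q : Fin k → Fin n} (hp : StrictMono p) (hq : StrictMono q)
    (hpq : ∀ s, (p s : ℕ) ≤ q s + t ∧ (q s : ℕ) ≤ p s + t) :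
    0 < ((A ^ t).submatrix p q).det := by
  induction t generalizing q with
  | zero =>
    obtain rfl : q = p := funext fun s => Fin.ext (by have := hpq s; omega)
    simp [submatrix_one _ hp.injective]
  | succ t ih =>
    -- route through `q` clamped to within distance `t` of `p`
    let r : Fin k → Fin n := fun s =>
      ⟨max (min (q s) (p s + t)) (p s - t), by have := (p s).isLt; have := (q s).isLt; omega⟩
    have hr : StrictMono r := fun s s' hss' => by
      have := hp hss'
      have := hq hss'
      simp only [r, Fin.lt_def] at *
      omega
    rw [pow_succ, det_submatrix_mul]
    refine sum_pos' (fun f hf => mul_nonneg ((hA.pow t) k p f hp (mem_filter.mp hf).2)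
      (hA k f q (mem_filter.mp hf).2 hq)) ⟨r, mem_filter.mpr ⟨mem_univ _, hr⟩, ?_⟩
    exact mul_pos (ih hr fun s => by have := hpq s; simp only [r]; omega)
      (hadj k r q hr hq fun s => by have := hpq s; simp only [r]; omega)

theorem totallyPos_pow (hA : TotallyNonneg A)
    (hadj : ∀ (k : ℕ) (p q : Fin k → Fin n), StrictMono p → StrictMono q →
      (∀ s, (p s : ℕ) ≤ q s + 1 ∧ (q s : ℕ) ≤ p s + 1) → 0 < (A.submatrix p q).det) :
    TotallyPos (A ^ (n - 1)) := fun _ p q hp hq =>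
  hA.det_submatrix_pow_pos hadj _ hp hq fun s => by
    have := (p s).isLt
    have := (q s).isLt
    omega

end TotallyNonneg

namespace Matrix

variable {n : ℕ}

structure IsPositiveBand (A : Matrix (Fin n) (Fin n) ℝ) (p q : ℕ) : Prop where
  hasBandwidth : A.HasBandwidth p q
  pos : ∀ a b : Fin n, (a : ℕ) ≤ b + p → (b : ℕ) ≤ a + q → 0 < A a b

namespace IsPositiveBand

variable {A L U : Matrix (Fin n) (Fin n) ℝ} {p q : ℕ}

theorem nonneg (hA : A.IsPositiveBand p q) (a b : Fin n) : 0 ≤ A a b := by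
  by_cases h : (a : ℕ) ≤ b + p ∧ (b : ℕ) ≤ a + q
  · exact (hA.pos a b h.1 h.2).le
  · rw [hA.hasBandwidth.apply_eq_zero (by omega)]

theorem transpose (hA : A.IsPositiveBand p q) : Aᵀ.IsPositiveBand q p :=
  ⟨hA.hasBandwidth.transpose, fun a b hab hba => hA.pos b a hba hab⟩

theorem mul_diagonal (hA : A.IsPositiveBand p q) {d : Fin n → ℝ} (hd : ∀ i, 0 < d i) :
    (A * diagonal d).IsPositiveBand p q := by
  refine ⟨fun a b h => hA.hasBandwidth a b ?_, fun a b hab hba => ?_⟩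
  · rw [Matrix.mul_diagonal] at h
    exact left_ne_zero_of_mul h
  · rw [Matrix.mul_diagonal]
    exact mul_pos (hA.pos a b hab hba) (hd b)

theorem det_submatrix_pos_of_one_zero (hL : L.IsPositiveBand 1 0) {k : ℕ}
    {r c : Fin k → Fin n} (hr : StrictMono r) (hc : StrictMono c)
    (hrc : ∀ s, (r s : ℕ) ≤ c s + 1 ∧ (c s : ℕ) ≤ r s) : 0 < (L.submatrix r c).det := by
  rw [det_submatrix_eq_prod_of_hasBandwidth_one_zero hL.hasBandwidth hr hc]
  exact prod_pos fun s _ => hL.pos _ _ (hrc s).1 (by have := (hrc s).2; omega)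

theorem det_submatrix_pos_of_zero_one (hU : U.IsPositiveBand 0 1) {k : ℕ}
    {r c : Fin k → Fin n} (hr : StrictMono r) (hc : StrictMono c)
    (hrc : ∀ s, (r s : ℕ) ≤ c s ∧ (c s : ℕ) ≤ r s + 1) : 0 < (U.submatrix r c).det := by
  rw [det_submatrix_eq_prod_of_hasBandwidth_zero_one hU.hasBandwidth hr hc]
  exact prod_pos fun s _ => hU.pos _ _ (by have := (hrc s).1; omega) (hrc s).2

theorem totallyNonneg_of_one_zero (hL : L.IsPositiveBand 1 0) : TotallyNonneg L :=
  .of_hasBandwidth_one_zero hL.hasBandwidth hL.nonneg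

theorem totallyNonneg_of_zero_one (hU : U.IsPositiveBand 0 1) : TotallyNonneg U :=
  .of_hasBandwidth_zero_one hU.hasBandwidth hU.nonneg

theorem det_submatrix_mul_pos (hL : L.IsPositiveBand 1 0) (hU : U.IsPositiveBand 0 1) {k : ℕ}
    {p q : Fin k → Fin n} (hp : StrictMono p) (hq : StrictMono q)
    (hpq : ∀ s, (p s : ℕ) ≤ q s + 1 ∧ (q s : ℕ) ≤ p s + 1) :
    0 < ((L * U).submatrix p q).det := by
  have hmin : StrictMono (p ⊓ q) := fun s s' hss' =>
    lt_min (min_lt_of_left_lt (hp hss')) (min_lt_of_right_lt (hq hss'))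
  rw [det_submatrix_mul]
  refine sum_pos' (fun f hf => mul_nonneg
      (hL.totallyNonneg_of_one_zero k p f hp (mem_filter.mp hf).2)
      (hU.totallyNonneg_of_zero_one k f q (mem_filter.mp hf).2 hq))
    ⟨p ⊓ q, mem_filter.mpr ⟨mem_univ _, hmin⟩, ?_⟩
  have hpq_min : ∀ s, ((p ⊓ q) s : ℕ) = min (p s : ℕ) (q s) := fun s => Fin.coe_min _ _
  exact mul_pos
    (hL.det_submatrix_pos_of_one_zero hp hmin fun s => by have := hpq s; rw [hpq_min]; omega)
    (hU.det_submatrix_pos_of_zero_one hmin hq fun s => by have := hpq s; rw [hpq_min]; omega)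

end IsPositiveBand

end Matrix

theorem List.prod_map_one_add_of_pairwise_mul_eq_zero {R : Type*} [Semiring R] {l : List R}
    (hl : l.Pairwise fun x y => x * y = 0) : (l.map (1 + ·)).prod = 1 + l.sum := by
  induction l with
  | nil => simp
  | cons x l ih =>
    rw [List.pairwise_cons] at hl
    have hx : x * l.sum = 0 := by
      rw [← smul_eq_mul, List.smul_sum]
      exact List.sum_eq_zero fun y hy => by
        obtain ⟨z, hz, rfl⟩ := List.mem_map.mp hy
        exact hl.1 z hz
    simp only [List.map_cons, List.prod_cons, List.sum_cons, ih hl.2, add_mul, mul_add, hx,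
      one_mul, mul_one, add_zero, add_assoc]

theorem Lmat_transpose (n i : ℕ) (q : ℝ) : (Lmat n i q)ᵀ = Umat n i q := by
  ext a b
  simp [Lmat, Umat, one_apply, eq_comm, and_comm]

theorem prod_Lmat_eq_one_add_sum {n : ℕ} (ℓ : Fin (n - 1) → ℝ) :
    (List.ofFn fun j : Fin (n - 1) => Lmat n (j + 2) (ℓ j)).prod =
      1 + ∑ j : Fin (n - 1), of fun a b : Fin n =>
        if (a : ℕ) + 1 = j + 2 ∧ (b : ℕ) + 2 = j + 2 then ℓ j else 0 := by
  rw [← List.sum_ofFn, ← List.prod_map_one_add_of_pairwise_mul_eq_zero, List.map_ofFn]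
  · rfl
  -- the nilpotent parts multiply to zero in the order of the product: `E₂₁ E₃₂ = 0`, ...
  refine List.pairwise_ofFn.mpr fun i j hij => ?_
  ext a b
  rw [mul_apply, Matrix.zero_apply]
  refine sum_eq_zero fun c _ => ?_
  simp only [of_apply]
  split_ifs <;> first | rw [mul_zero] | rw [zero_mul] | (rw [Fin.lt_def] at hij; omega)

theorem isPositiveBand_one_add_sum {n : ℕ} {ℓ : Fin (n - 1) → ℝ} (hℓ : ∀ j, 0 < ℓ j) :
    (1 + ∑ j : Fin (n - 1), of fun a b : Fin n =>
      if (a : ℕ) + 1 = j + 2 ∧ (b : ℕ) + 2 = j + 2 then ℓ j else 0).IsPositiveBand 1 0 := by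
  have hterm : ∀ (j : Fin (n - 1)) (a b : Fin n),
      0 ≤ if (a : ℕ) + 1 = j + 2 ∧ (b : ℕ) + 2 = j + 2 then ℓ j else 0 := fun j a b => by
    split_ifs
    exacts [(hℓ j).le, le_rfl]
  constructor
  · intro a b h
    rw [Matrix.add_apply, Matrix.sum_apply] at h
    by_cases hab : a = b
    · simp [hab]
    rw [one_apply_ne hab, zero_add] at h
    obtain ⟨j, -, hj⟩ := exists_ne_zero_of_sum_ne_zero h
    simp only [of_apply, ne_eq, ite_eq_right_iff, not_forall] at hj
    obtain ⟨⟨h₁, h₂⟩, -⟩ := hj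
    omega
  · intro a b hab hba
    simp only [Matrix.add_apply, Matrix.sum_apply, of_apply]
    by_cases h : a = b
    · rw [h, one_apply_eq]
      exact add_pos_of_pos_of_nonneg one_pos (sum_nonneg fun j _ => hterm j b b)
    rw [one_apply_ne h, zero_add]
    have hb : (b : ℕ) < n - 1 := by
      have := a.isLt
      have := Fin.val_ne_of_ne h
      omega
    refine sum_pos' (fun j _ => hterm j a b) ⟨⟨b, hb⟩, mem_univ _, ?_⟩
    have hab' : (a : ℕ) + 1 = b + 2 ∧ (b : ℕ) + 2 = b + 2 := ⟨by omega, rfl⟩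
    rw [if_pos hab']
    exact hℓ _

theorem prod_Umat_eq_transpose {n : ℕ} (u : Fin (n - 1) → ℝ) :
    (List.ofFn fun j : Fin (n - 1) => Umat n (n - j) (u j)).prod =
      (List.ofFn fun j : Fin (n - 1) => Lmat n (j + 2) (u (Fin.rev j))).prodᵀ := by
  rw [transpose_list_prod, List.map_ofFn]
  congr 1
  refine List.ext_getElem (by simp) fun i h _ => ?_
  simp only [List.length_ofFn] at h
  simp only [List.getElem_ofFn, List.getElem_reverse, List.length_ofFn, Function.comp_apply,
    Lmat_transpose]
  congr 2
  · omega
  · simp only [Fin.ext_iff, Fin.val_rev]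
    omega

/-- A = L_2(ℓ_1)L_3(ℓ_2)⋯L_n(ℓ_{n−1}) · D · U_n(u_{n−1})⋯U_3(u_2)U_2(u_1) with all
multipliers positive: the (n,1) and (1,n) entries of A^{n−2} vanish, and the exponent
of the oscillatory matrix A equals n−1. -/
theorem stmt13 {n : ℕ} (hn : 2 ≤ n) (ℓ u : Fin (n - 1) → ℝ) (dd : Fin n → ℝ)
    (hℓ : ∀ j, 0 < ℓ j) (hu : ∀ j, 0 < u j) (hdd : ∀ i, 0 < dd i)
    (A : Matrix (Fin n) (Fin n) ℝ)
    (hA : A = (List.ofFn fun j : Fin (n - 1) => Lmat n (j.val + 2) (ℓ j)).prod *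
        Matrix.diagonal dd *
        (List.ofFn fun j : Fin (n - 1) => Umat n (n - j.val) (u j)).prod) :
    (A ^ (n - 2)) ⟨n - 1, by omega⟩ ⟨0, by omega⟩ = 0 ∧
    (A ^ (n - 2)) ⟨0, by omega⟩ ⟨n - 1, by omega⟩ = 0 ∧
    IsLeast {r : ℕ | 0 < r ∧ TotallyPos (A ^ r)} (n - 1) := by
  have hL := (isPositiveBand_one_add_sum hℓ).mul_diagonal hdd
  have hU := (isPositiveBand_one_add_sum fun j => hu j.rev).transpose
  rw [← prod_Lmat_eq_one_add_sum] at hL hU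
  rw [← prod_Umat_eq_transpose] at hU
  subst hA
  set L := (List.ofFn fun j : Fin (n - 1) => Lmat n (j.val + 2) (ℓ j)).prod * diagonal dd
  set U := (List.ofFn fun j : Fin (n - 1) => Umat n (n - j.val) (u j)).prod
  have hcorner : ∀ r < n - 1, ((L * U) ^ r) ⟨n - 1, by omega⟩ ⟨0, by omega⟩ = 0 ∧
      ((L * U) ^ r) ⟨0, by omega⟩ ⟨n - 1, by omega⟩ = 0 := fun r hr =>
    have hband := (hL.hasBandwidth.mul hU.hasBandwidth).pow r
    ⟨hband.apply_eq_zero (by dsimp only; omega), hband.apply_eq_zero (by dsimp only; omega)⟩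
  refine ⟨(hcorner _ (by omega)).1, (hcorner _ (by omega)).2, ⟨by omega, ?_⟩,
    fun r ⟨_, hTP⟩ => ?_⟩
  · exact (hL.totallyNonneg_of_one_zero.mul hU.totallyNonneg_of_zero_one).totallyPos_pow
      fun _ _ _ => hL.det_submatrix_mul_pos hU
  · by_contra! hr
    exact (hTP.apply_pos _ _).ne' (hcorner r hr).1
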